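/- arXiv:2210.17330 — 3 statements merged into one kernel-verified Lean document; each statement's English description precedes it below -/
import Mathlib

section
/- Let X be a finite set and let m₁, m₂ be mass functions on X. Then m₁ ∩ m₂ ≤_s m₁ and m₁ ∩ m₂ ≤_s m₂, where (m₁ ∩ m₂)(Y) = Σ_{Y₁ ∩ Y₂ = Y} m₁(Y₁)·m₂(Y₂) is the unnormalized conjunctive (Dempster) combination. -/
/-- A (Dempster–Shafer) mass function on a finite set `X`: a nonnegative real-valued
function on subsets of `X` summing to `1`. -/
def IsMassFunction {X : Type*} [Fintype X] (m : Finset X → ℝ) : Prop :=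
  (∀ Y, 0 ≤ m Y) ∧ (∑ Y : Finset X, m Y = 1)

/-- Unnormalized conjunctive (Dempster) combination:
`(m₁ ∩ m₂)(Y) = Σ_{Y₁ ∩ Y₂ = Y} m₁(Y₁)·m₂(Y₂)`. -/
def conjComb {X : Type*} [Fintype X] [DecidableEq X] (m₁ m₂ : Finset X → ℝ)
    (Y : Finset X) : ℝ :=
  ∑ p : Finset X × Finset X, if p.1 ∩ p.2 = Y then m₁ p.1 * m₂ p.2 else 0

/-- The s-ordering on mass functions: `m ≤_s m'` iff there is a (generalized stochastic)
matrix `S` with nonnegative entries, columns summing to one, `S(W,Y) > 0 → W ⊆ Y`,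
and `m(W) = Σ_Y S(W,Y)·m'(Y)`. -/
def sLE {X : Type*} [Fintype X] (m m' : Finset X → ℝ) : Prop :=
  ∃ S : Finset X → Finset X → ℝ,
    (∀ W Y, 0 ≤ S W Y) ∧
    (∀ Y, ∑ W : Finset X, S W Y = 1) ∧
    (∀ W Y, 0 < S W Y → W ⊆ Y) ∧
    (∀ W, m W = ∑ Y : Finset X, S W Y * m' Y)

/-! Drawing `Z` from `m₂` and sending `Y` to `Y ∩ Z` is a stochastic kernel that only shrinks
sets, and it maps `m₁` to `m₁ ∩ m₂`. The second inequality follows by commutativity. -/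

section interKernel

variable {X : Type*} [Fintype X] [DecidableEq X]

theorem conjComb_comm (m₁ m₂ : Finset X → ℝ) : conjComb m₁ m₂ = conjComb m₂ m₁ := by
  funext Y
  unfold conjComb
  rw [← (Equiv.prodComm _ _).sum_comp]
  simp only [Equiv.prodComm_apply, Prod.fst_swap, Prod.snd_swap, Finset.inter_comm, mul_comm]

def interKernel (m : Finset X → ℝ) (W Y : Finset X) : ℝ :=
  ∑ Z : Finset X, if Y ∩ Z = W then m Z else 0

theorem interKernel_nonneg {m : Finset X → ℝ} (hm : ∀ Z, 0 ≤ m Z) (W Y : Finset X) :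
    0 ≤ interKernel m W Y :=
  Finset.sum_nonneg fun Z _ => ite_nonneg (hm Z) le_rfl

theorem sum_interKernel (m : Finset X → ℝ) (Y : Finset X) :
    ∑ W : Finset X, interKernel m W Y = ∑ Z : Finset X, m Z := by
  unfold interKernel
  rw [Finset.sum_comm]
  simp

theorem subset_of_interKernel_pos {m : Finset X → ℝ} {W Y : Finset X}
    (h : 0 < interKernel m W Y) : W ⊆ Y := by
  obtain ⟨Z, -, hZ⟩ := Finset.exists_ne_zero_of_sum_ne_zero h.ne'
  rw [ne_eq, ite_eq_right_iff, Classical.not_imp] at hZ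
  exact hZ.1 ▸ Finset.inter_subset_left

theorem conjComb_eq_sum_interKernel_mul (m₁ m₂ : Finset X → ℝ) (W : Finset X) :
    conjComb m₁ m₂ W = ∑ Y : Finset X, interKernel m₂ W Y * m₁ Y := by
  simp only [conjComb, interKernel, Fintype.sum_prod_type, Finset.sum_mul, ite_mul, zero_mul,
    mul_comm (m₁ _)]

theorem sLE_conjComb_left (m₁ : Finset X → ℝ)
    {m₂ : Finset X → ℝ} (h₂ : IsMassFunction m₂) : sLE (conjComb m₁ m₂) m₁ :=
  ⟨interKernel m₂, interKernel_nonneg h₂.1, fun Y => (sum_interKernel m₂ Y).trans h₂.2,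
    fun _ _ => subset_of_interKernel_pos, conjComb_eq_sum_interKernel_mul m₁ m₂⟩

end interKernel

/-- `m₁ ∩ m₂ ≤_s m₁` and `m₁ ∩ m₂ ≤_s m₂`. -/
theorem conjComb_sLE {X : Type*} [Fintype X] [DecidableEq X] (m₁ m₂ : Finset X → ℝ)
    (h₁ : IsMassFunction m₁) (h₂ : IsMassFunction m₂) :
    sLE (conjComb m₁ m₂) m₁ ∧ sLE (conjComb m₁ m₂) m₂ :=
  ⟨sLE_conjComb_left m₁ h₂, conjComb_comm m₁ m₂ ▸ sLE_conjComb_left m₂ h₁⟩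
end

section
/- Let X be a finite set and let m₁, m₂ be mass functions on X. Then m₁ ≤_↑ m₁ ∪ m₂ and m₂ ≤_↑ m₁ ∪ m₂, where (m₁ ∪ m₂)(Y) = Σ_{Y₁ ∪ Y₂ = Y} m₁(Y₁)·m₂(Y₂) is the disjunctive combination. -/
/-- Disjunctive combination: `(m₁ ∪ m₂)(Y) = Σ_{Y₁ ∪ Y₂ = Y} m₁(Y₁)·m₂(Y₂)`. -/
def disjComb {X : Type*} [Fintype X] [DecidableEq X] (m₁ m₂ : Finset X → ℝ)
    (Y : Finset X) : ℝ :=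
  ∑ p : Finset X × Finset X, if p.1 ∪ p.2 = Y then m₁ p.1 * m₂ p.2 else 0

/-- The up-set restricted order: `m ≤_↑ m'` iff for every upward closed family `𝒱`
of subsets of `X`, `Σ_{Y ∈ 𝒱} m(Y) ≤ Σ_{Y ∈ 𝒱} m'(Y)`. -/
def upLE {X : Type*} [Fintype X] (m m' : Finset X → ℝ) : Prop :=
  ∀ V : Finset (Finset X), (∀ Y ∈ V, ∀ Z : Finset X, Y ⊆ Z → Z ∈ V) →
    (∑ Y ∈ V, m Y) ≤ ∑ Y ∈ V, m' Y

/-! Over an up-set `V`, the `disjComb m₁ m₂`-mass of `V` is the product mass of the pairs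
`(Y₁, Y₂)` with `Y₁ ∪ Y₂ ∈ V`, while, `m₂` having total mass `1`, the `m₁`-mass of `V` is the
product mass of the pairs with `Y₁ ∈ V`. Upward closure makes the second set of pairs a subset
of the first, and the weights are nonnegative. The bound for `m₂` follows since `∪` is
commutative. -/

section DisjComb

variable {X : Type*} [Fintype X] [DecidableEq X]

theorem disjComb_comm (m₁ m₂ : Finset X → ℝ) : disjComb m₁ m₂ = disjComb m₂ m₁ := by
  ext Y
  unfold disjComb
  rw [← (Equiv.prodComm _ _).sum_comp]
  simp [Finset.union_comm, mul_comm]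

theorem sum_disjComb (m₁ m₂ : Finset X → ℝ) (V : Finset (Finset X)) :
    ∑ Y ∈ V, disjComb m₁ m₂ Y =
      ∑ p : Finset X × Finset X with p.1 ∪ p.2 ∈ V, m₁ p.1 * m₂ p.2 := by
  rw [Finset.sum_filter]
  unfold disjComb
  rw [Finset.sum_comm]
  exact Finset.sum_congr rfl fun p _ => Finset.sum_ite_eq V _ _

theorem sum_eq_sum_mul_of_sum_eq_one {m₂ : Finset X → ℝ} (h : ∑ Y, m₂ Y = 1)
    (m₁ : Finset X → ℝ) (V : Finset (Finset X)) :
    ∑ Y ∈ V, m₁ Y = ∑ p : Finset X × Finset X with p.1 ∈ V, m₁ p.1 * m₂ p.2 := by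
  have hV : ({p | p.1 ∈ V} : Finset (Finset X × Finset X)) = V ×ˢ Finset.univ := by
    ext p; simp
  simp [hV, Finset.sum_product, ← Finset.mul_sum, h]

theorem upLE_disjComb_left {m₁ m₂ : Finset X → ℝ} (hm₁ : ∀ Y, 0 ≤ m₁ Y)
    (hm₂ : ∀ Y, 0 ≤ m₂ Y) (h : ∑ Y, m₂ Y = 1) : upLE m₁ (disjComb m₁ m₂) := by
  intro V hV
  rw [sum_disjComb, sum_eq_sum_mul_of_sum_eq_one h]
  refine Finset.sum_le_sum_of_subset_of_nonneg ?_ fun p _ _ => mul_nonneg (hm₁ _) (hm₂ _)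
  intro p
  simpa using fun hp => hV p.1 hp _ Finset.subset_union_left

end DisjComb

/-- `m₁ ≤_↑ m₁ ∪ m₂` and `m₂ ≤_↑ m₁ ∪ m₂`. -/
theorem upLE_disjComb {X : Type*} [Fintype X] [DecidableEq X] (m₁ m₂ : Finset X → ℝ)
    (h₁ : IsMassFunction m₁) (h₂ : IsMassFunction m₂) :
    upLE m₁ (disjComb m₁ m₂) ∧ upLE m₂ (disjComb m₁ m₂) :=
  ⟨upLE_disjComb_left h₁.1 h₂.1 h₂.2,
    disjComb_comm m₂ m₁ ▸ upLE_disjComb_left h₂.1 h₁.1 h₁.2⟩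
end

section
/- Let X be a finite set, let S₁, S₂ ⊆ X × X be substitution relations, and let m₁, m₂ be mass functions on X. Then m₁ ∩_S m₂ ≤_↑ m₁ ∪_S m₂. -/
open scoped Classical in
/-- Substitution image of an agenda `Z ⊆ X` under a substitution relation `S ⊆ X × X`:
`Sub(Z) = {n | ∃ m ∈ Z, S(n,m)}`. -/
noncomputable def subImage {X : Type*} [Fintype X] (S : Set (X × X)) (Z : Finset X) :
    Finset X :=
  Finset.univ.filter fun n => ∃ m ∈ Z, (n, m) ∈ S

/-- Substitution-conjunctive combination:
`(m₁ ∩_S m₂)(Y) = Σ { m₁(Z₁)·m₂(Z₂) : Sub₂(Z₁) ∩ Sub₁(Z₂) = Y }`. -/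
noncomputable def substConj {X : Type*} [Fintype X] [DecidableEq X]
    (S₁ S₂ : Set (X × X)) (m₁ m₂ : Finset X → ℝ) (Y : Finset X) : ℝ :=
  ∑ p : Finset X × Finset X,
    if subImage S₂ p.1 ∩ subImage S₁ p.2 = Y then m₁ p.1 * m₂ p.2 else 0

/-- Substitution-disjunctive combination:
`(m₁ ∪_S m₂)(Y) = Σ { m₁(Z₁)·m₂(Z₂) : Sub₂(Z₁) ∪ Sub₁(Z₂) = Y }`. -/
noncomputable def substDisj {X : Type*} [Fintype X] [DecidableEq X]
    (S₁ S₂ : Set (X × X)) (m₁ m₂ : Finset X → ℝ) (Y : Finset X) : ℝ :=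
  ∑ p : Finset X × Finset X,
    if subImage S₂ p.1 ∪ subImage S₁ p.2 = Y then m₁ p.1 * m₂ p.2 else 0

/-! An upward-closed family is hit by `Y` whenever it is hit by any `Y' ⊆ Y`. For each pair of
focal sets, the conjunctive combination sends the product mass to `Sub₂(Z₁) ∩ Sub₁(Z₂)` and the
disjunctive one to the larger set `Sub₂(Z₁) ∪ Sub₁(Z₂)`; comparing pair by pair gives the order. -/

section Pushforward

variable {ι X : Type*} [Fintype ι] [DecidableEq X]

theorem sum_sum_ite_eq_sum_ite_mem (w : ι → ℝ) (f : ι → Finset X) (V : Finset (Finset X)) :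
    ∑ Y ∈ V, ∑ i, (if f i = Y then w i else 0) = ∑ i, if f i ∈ V then w i else 0 := by
  rw [Finset.sum_comm]
  exact Finset.sum_congr rfl fun i _ => Finset.sum_ite_eq V (f i) fun _ => w i

theorem upLE_sum_ite_of_subset [Fintype X] (w : ι → ℝ) (hw : ∀ i, 0 ≤ w i)
    (f g : ι → Finset X) (hfg : ∀ i, f i ⊆ g i) :
    upLE (fun Y => ∑ i, if f i = Y then w i else 0)
      (fun Y => ∑ i, if g i = Y then w i else 0) := by
  intro V hV
  simp only [sum_sum_ite_eq_sum_ite_mem]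
  refine Finset.sum_le_sum fun i _ => ?_
  by_cases hf : f i ∈ V
  · rw [if_pos hf, if_pos (hV _ hf _ (hfg i))]
  · rw [if_neg hf]
    split_ifs
    exacts [hw i, le_rfl]

end Pushforward

/-- `m₁ ∩_S m₂ ≤_↑ m₁ ∪_S m₂`. -/
theorem substConj_upLE_substDisj {X : Type*} [Fintype X] [DecidableEq X]
    (S₁ S₂ : Set (X × X)) (m₁ m₂ : Finset X → ℝ)
    (h₁ : IsMassFunction m₁) (h₂ : IsMassFunction m₂) :
    upLE (substConj S₁ S₂ m₁ m₂) (substDisj S₁ S₂ m₁ m₂) := by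
  unfold substConj substDisj
  refine upLE_sum_ite_of_subset (ι := Finset X × Finset X) (fun p => m₁ p.1 * m₂ p.2) ?_
    (fun p => subImage S₂ p.1 ∩ subImage S₁ p.2) (fun p => subImage S₂ p.1 ∪ subImage S₁ p.2) ?_
  · exact fun p => mul_nonneg (h₁.1 p.1) (h₂.1 p.2)
  · exact fun _ => Finset.inter_subset_union
end
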